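/- For every real q ∈ (1, 32/27) there exists a closed disk V ⊆ ℂ such that V is contained in the open disk {z : |z| < √(q−1)} (so in particular 1 ∉ V and f_q is defined on V), 0 ∈ V, f_q(V) = V, and the product set V·V is contained in the interior of V. -/

import Mathlib

/-!
Take a disk `V` with real centre `-t` and radius `ρ`. Writing `w = y - 1`, it is the disk
`|w + (1 + t)| ≤ ρ`, and the inversion `w ↦ q / w` maps it onto itself exactly when
`(1 + t)² - ρ² = q`; this makes `V` invariant under the involution `f_q`. Every point of `V` has
modulus at most `s = t + ρ`, so `V·V ⊆ int V` as soon as `s² + t < ρ`, and `V` lies in the disk of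
radius `√(q - 1)` as soon as `s² < q - 1`. Eliminating `t` and `ρ` in favour of `s`, the
conditions become `s² < q - 1` and `s³ + s² - s + (q - 1) < 0`; the cubic attains its minimum
`q - 1 - 5/27` at `s = 1/3`, which is where the bound `q < 32/27` comes from.
-/

noncomputable section

/-- The Möbius transformation `f_q(y) = 1 + q/(y-1)`. -/
def fq (q y : ℂ) : ℂ := 1 + q / (y - 1)

/-- The product set `V·V = {v·w : v, w ∈ V}`. -/
def prodSet (V : Set ℂ) : Set ℂ := {z | ∃ v ∈ V, ∃ w ∈ V, z = v * w}

open Metric Set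

theorem fq_fq {q y : ℂ} (hq : q ≠ 0) (hy : y ≠ 1) : fq q (fq q y) = y := by
  have hy' : y - 1 ≠ 0 := sub_ne_zero.mpr hy
  simp only [fq, add_sub_cancel_left]
  field_simp
  ring

theorem norm_mul_add_sq_eq {a ρ q : ℝ} (h : a ^ 2 - ρ ^ 2 = q) (w : ℂ) :
    ‖(a : ℂ) * w + q‖ ^ 2 = ρ ^ 2 * ‖w‖ ^ 2 + q * (‖w + a‖ ^ 2 - ρ ^ 2) := by
  simp only [Complex.sq_norm, Complex.normSq_apply, Complex.add_re, Complex.add_im,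
    Complex.mul_re, Complex.mul_im, Complex.ofReal_re, Complex.ofReal_im]
  linear_combination (w.re ^ 2 + w.im ^ 2 - q) * h

section InvariantDisk

variable {t ρ q : ℝ}

theorem one_notMem_closedBall_neg (hρt : ρ < 1 + t) : (1 : ℂ) ∉ closedBall (-t : ℂ) ρ := by
  rw [mem_closedBall, Complex.dist_eq, sub_neg_eq_add, not_le]
  exact_mod_cast hρt.trans_le (le_abs_self _)

theorem fq_mapsTo_closedBall (hρ : 0 ≤ ρ) (hρt : ρ < 1 + t) (hq : (1 + t) ^ 2 - ρ ^ 2 = q) :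
    MapsTo (fq q) (closedBall (-t : ℂ) ρ) (closedBall (-t : ℂ) ρ) := by
  intro y hy
  have hw : y - 1 ≠ 0 := sub_ne_zero.mpr (ne_of_mem_of_not_mem hy (one_notMem_closedBall_neg hρt))
  have hq0 : 0 ≤ q := by nlinarith
  have hy' : ‖(y - 1) + ((1 + t : ℝ) : ℂ)‖ ≤ ρ := by
    rw [mem_closedBall, Complex.dist_eq, sub_neg_eq_add] at hy
    convert hy using 2
    push_cast
    ring
  have hsq : ‖((1 + t : ℝ) : ℂ) * (y - 1) + q‖ ^ 2 ≤ (ρ * ‖y - 1‖) ^ 2 := by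
    rw [norm_mul_add_sq_eq hq, mul_pow]
    have : ‖(y - 1) + ((1 + t : ℝ) : ℂ)‖ ^ 2 ≤ ρ ^ 2 := pow_le_pow_left₀ (norm_nonneg _) hy' 2
    nlinarith
  have hfq : fq q y - (-t) = (((1 + t : ℝ) : ℂ) * (y - 1) + q) / (y - 1) := by
    rw [fq]
    field_simp
    push_cast
    ring
  rw [mem_closedBall, Complex.dist_eq, hfq, norm_div, div_le_iff₀ (norm_pos_iff.mpr hw)]
  exact (pow_le_pow_iff_left₀ (norm_nonneg _) (by positivity) two_ne_zero).mp hsq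

theorem fq_image_closedBall (hρ : 0 ≤ ρ) (hρt : ρ < 1 + t) (hq : (1 + t) ^ 2 - ρ ^ 2 = q) :
    fq q '' closedBall (-t : ℂ) ρ = closedBall (-t : ℂ) ρ := by
  have hq0 : (q : ℂ) ≠ 0 := Complex.ofReal_ne_zero.mpr (by nlinarith)
  have hinv : LeftInvOn (fq q) (fq q) (closedBall (-t : ℂ) ρ) := fun y hy =>
    fq_fq hq0 (ne_of_mem_of_not_mem hy (one_notMem_closedBall_neg hρt))
  have hmaps := fq_mapsTo_closedBall hρ hρt hq
  exact (InvOn.bijOn ⟨hinv, hinv⟩ hmaps hmaps).image_eq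

end InvariantDisk

theorem prodSet_closedBall_subset_ball {c : ℂ} {ρ : ℝ} (h : (‖c‖ + ρ) ^ 2 + ‖c‖ < ρ) :
    prodSet (closedBall c ρ) ⊆ ball c ρ := by
  rintro _ ⟨v, hv, w, hw, rfl⟩
  have hv' := norm_le_of_mem_closedBall hv
  have hw' := norm_le_of_mem_closedBall hw
  rw [mem_ball, dist_eq_norm]
  calc ‖v * w - c‖ ≤ ‖v‖ * ‖w‖ + ‖c‖ := by
        rw [← norm_mul]
        exact norm_sub_le _ _
    _ ≤ (‖c‖ + ρ) ^ 2 + ‖c‖ := by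
        have := (norm_nonneg v).trans hv'
        rw [sq]
        gcongr
    _ < ρ := h

theorem exists_pos_sq_lt_and_cubic_neg {ε : ℝ} (hε0 : 0 < ε) (hε : ε < 5 / 27) :
    ∃ s : ℝ, 0 < s ∧ s ^ 2 < ε ∧ s ^ 3 + s ^ 2 - s + ε < 0 := by
  rcases lt_or_ge (1 / 9) ε with hε9 | hε9
  · exact ⟨1 / 3, by norm_num, by linarith, by linarith⟩
  · set u := √ε
    have hu0 : 0 < u := Real.sqrt_pos.mpr hε0
    have hu2 : u ^ 2 = ε := Real.sq_sqrt hε0.le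
    have hu3 : u ≤ 1 / 3 := by nlinarith
    refine ⟨9 / 10 * u, by positivity, by nlinarith, ?_⟩
    nlinarith [mul_pos hu0 hu0, mul_pos (mul_pos hu0 hu0) hu0]

theorem exists_disk_parameters {q : ℝ} (hq0 : 1 < q) (hq1 : q < 32 / 27) :
    ∃ t ρ : ℝ, 0 ≤ t ∧ t ≤ ρ ∧ (1 + t) ^ 2 - ρ ^ 2 = q ∧ (t + ρ) ^ 2 < q - 1 ∧
      (t + ρ) ^ 2 + t < ρ := by
  obtain ⟨s, hs0, hs_sq, hs_cubic⟩ :=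
    exists_pos_sq_lt_and_cubic_neg (sub_pos.mpr hq0) (by linarith)
  -- the unique `t` with `(1 + t)² - (s - t)² = q`
  set t := (s ^ 2 + (q - 1)) / (2 * (s + 1))
  have ht : 2 * (s + 1) * t = s ^ 2 + (q - 1) := by
    simp only [t]
    field_simp
  have ht0 : 0 ≤ t := by positivity
  have hts : 2 * t < s - s ^ 2 := by nlinarith
  refine ⟨t, s - t, ht0, by nlinarith, by linear_combination ht, ?_, ?_⟩
  · simpa using hs_sq
  · simp only [add_sub_cancel]
    linarith

/-- **Theorem.** For every real `q ∈ (1, 32/27)` there is a closed disk `V` contained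
in the open disk of radius `√(q-1)` about `0`, with `0 ∈ V`, `f_q(V) = V`, and
`V·V` contained in the interior of `V`. -/
theorem invariant_disk_for_q_between_one_and_32_27
    (q : ℝ) (hq0 : 1 < q) (hq1 : q < 32 / 27) :
    ∃ (c : ℂ) (ρ : ℝ), 0 ≤ ρ ∧
      Metric.closedBall c ρ ⊆ Metric.ball (0 : ℂ) (Real.sqrt (q - 1)) ∧
      (0 : ℂ) ∈ Metric.closedBall c ρ ∧
      fq (q : ℂ) '' Metric.closedBall c ρ = Metric.closedBall c ρ ∧
      prodSet (Metric.closedBall c ρ) ⊆ interior (Metric.closedBall c ρ) := by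
  obtain ⟨t, ρ, ht, htρ, hq, hsub, hprod⟩ := exists_disk_parameters hq0 hq1
  have hρ : 0 ≤ ρ := ht.trans htρ
  have hρt : ρ < 1 + t := by nlinarith
  have hc : ‖(-t : ℂ)‖ = t := by simp [abs_of_nonneg ht]
  refine ⟨-t, ρ, hρ, closedBall_subset_ball' ?_, ?_, fq_image_closedBall hρ hρt hq,
    (prodSet_closedBall_subset_ball ?_).trans ball_subset_interior_closedBall⟩
  · rw [dist_zero_right, hc, add_comm]
    exact Real.lt_sqrt_of_sq_lt hsub
  · rwa [mem_closedBall, dist_zero_left, hc]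
  · rwa [hc]

end
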